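/- The presented group on six generators x₁, …, x₆ with defining relations x₆x₅x₄x₃x₂x₁ = e, x₄ = x₅, x₁ = x₄x₃x₄⁻¹, x₄x₃x₂ = x₂x₄x₃, x₄x₃x₂x₄x₃ = x₃x₂x₄x₃x₄, (x₄x₆)² = (x₆x₄)², x₄x₃x₄⁻¹·x₄x₂·x₄x₃x₄⁻¹·x₄ = x₄x₂·x₄x₃x₄⁻¹·x₄·x₄x₃x₄⁻¹, x₂·x₄x₃x₄⁻¹·x₄ = x₄x₃x₄⁻¹·x₄·x₂, x₄x₃x₄⁻¹ = x₂⁻¹x₃⁻¹x₄⁻¹x₆x₄⁻¹x₆⁻¹x₄x₃x₄⁻¹x₆x₄x₆⁻¹x₄x₃x₂, x₂⁻¹x₃⁻¹x₄⁻¹x₆x₄x₆⁻¹x₄x₃x₂ = x₄x₃x₄⁻¹·x₄·x₄x₃⁻¹x₄⁻¹, x₄x₁x₄⁻¹x₆ = x₆x₄x₁x₄⁻¹, x₄x₂x₄⁻¹x₆ = x₆x₄x₂x₄⁻¹, x₅x₃x₅⁻¹x₆ = x₆x₅x₃x₅⁻¹ is isomorphic to the direct product of ℤ with the free group on two generators.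 -/

import Mathlib

/-!
Write `a, b, c` for the images of `x₂, x₃, x₄` (the generators `of 1, of 2, of 3`), and put
`u = c b`, `v = a u²`. The relations give `x₅ = c` and `x₁ = c b c⁻¹`; the relation
`x₂ · x₄x₃x₄⁻¹ · x₄ = x₄x₃x₄⁻¹ · x₄ · x₂` says that `a` commutes with `u`, after which the relation
`x₄x₃x₄⁻¹ · x₄x₂ · x₄x₃x₄⁻¹ · x₄ = …` says that `c` commutes with `v`, and the first relation
becomes `x₆ = v⁻¹`. So the group is generated by `u`, `c` and the central element `v`, which gives a
surjection `ℤ × F(u, c) → G`, `(m, w) ↦ vᵐ w`. Conversely, with `z` generating `ℤ`, sending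
`x₁, …, x₆` to `u c⁻¹, z u⁻², c⁻¹ u, c, c, z⁻¹` in `ℤ × F(u, c)` kills every relator and inverts
that surjection.
-/

namespace Stmt8

/-- Generators `x₁, …, x₆` of the free group, indexed by `0, …, 5`. -/
def x (i : Fin 6) : FreeGroup (Fin 6) := FreeGroup.of i

/-- The relators corresponding to the thirteen defining relations. -/
def rels : Set (FreeGroup (Fin 6)) :=
  { x 5 * x 4 * x 3 * x 2 * x 1 * x 0,
    x 3 * (x 4)⁻¹,
    x 0 * (x 3 * x 2 * (x 3)⁻¹)⁻¹,
    (x 3 * x 2 * x 1) * (x 1 * x 3 * x 2)⁻¹,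
    (x 3 * x 2 * x 1 * x 3 * x 2) * (x 2 * x 1 * x 3 * x 2 * x 3)⁻¹,
    (x 3 * x 5) ^ 2 * ((x 5 * x 3) ^ 2)⁻¹,
    (x 3 * x 2 * (x 3)⁻¹ * x 3 * x 1 * x 3 * x 2 * (x 3)⁻¹ * x 3) *
      (x 3 * x 1 * x 3 * x 2 * (x 3)⁻¹ * x 3 * x 3 * x 2 * (x 3)⁻¹)⁻¹,
    (x 1 * x 3 * x 2 * (x 3)⁻¹ * x 3) * (x 3 * x 2 * (x 3)⁻¹ * x 3 * x 1)⁻¹,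
    (x 3 * x 2 * (x 3)⁻¹) *
      ((x 1)⁻¹ * (x 2)⁻¹ * (x 3)⁻¹ * x 5 * (x 3)⁻¹ * (x 5)⁻¹ * x 3 * x 2 * (x 3)⁻¹ *
        x 5 * x 3 * (x 5)⁻¹ * x 3 * x 2 * x 1)⁻¹,
    ((x 1)⁻¹ * (x 2)⁻¹ * (x 3)⁻¹ * x 5 * x 3 * (x 5)⁻¹ * x 3 * x 2 * x 1) *
      (x 3 * x 2 * (x 3)⁻¹ * x 3 * x 3 * (x 2)⁻¹ * (x 3)⁻¹)⁻¹,
    (x 3 * x 0 * (x 3)⁻¹ * x 5) * (x 5 * x 3 * x 0 * (x 3)⁻¹)⁻¹,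
    (x 3 * x 1 * (x 3)⁻¹ * x 5) * (x 5 * x 3 * x 1 * (x 3)⁻¹)⁻¹,
    (x 4 * x 2 * (x 4)⁻¹ * x 5) * (x 5 * x 4 * x 2 * (x 4)⁻¹)⁻¹ }

end Stmt8

@[simp]
theorem PresentedGroup.mk_of {α : Type*} {rels : Set (FreeGroup α)} (a : α) :
    PresentedGroup.mk rels (FreeGroup.of a) = PresentedGroup.of a :=
  rfl

theorem FreeGroup.commute_lift {α G : Type*} [Group G] {f : α → G} {g : G}
    (h : ∀ a, Commute g (f a)) (w : FreeGroup α) : Commute g (lift f w) := by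
  have hrange : (lift f).range ≤ Subgroup.centralizer {g} := range_lift_le <| by
    rintro _ ⟨a, rfl⟩
    exact Subgroup.mem_centralizer_singleton_iff.mpr (h a).eq.symm
  exact (Subgroup.mem_centralizer_singleton_iff.mp (hrange ⟨w, rfl⟩)).symm

theorem MonoidHom.prod_ext {M N P : Type*} [Monoid M] [Monoid N] [Monoid P] {f g : M × N →* P}
    (hl : f.comp (inl M N) = g.comp (inl M N)) (hr : f.comp (inr M N) = g.comp (inr M N)) :
    f = g := by
  ext ⟨m, n⟩
  rw [← Prod.fst_mul_snd (m, n)]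
  simp only [map_mul]
  exact congrArg₂ (· * ·) (DFunLike.congr_fun hl m) (DFunLike.congr_fun hr n)

namespace Stmt8

open PresentedGroup

abbrev G : Type := PresentedGroup rels

def u : G := of 3 * of 2

def v : G := of 1 * u * u

theorem of_four : (of 4 : G) = of 3 :=
  (mk_eq_mk_of_mul_inv_mem (x := x 3) (y := x 4) (by simp [rels])).symm

theorem of_zero : (of 0 : G) = of 3 * of 2 * (of 3)⁻¹ := by
  simpa [x] using mk_eq_mk_of_mul_inv_mem (rels := rels) (x := x 0) (y := x 3 * x 2 * (x 3)⁻¹)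
    (by simp [rels])

theorem commute_of_one_u : Commute (of 1 : G) u := by
  have := mk_eq_mk_of_mul_inv_mem (rels := rels) (x := x 1 * x 3 * x 2 * (x 3)⁻¹ * x 3)
    (y := x 3 * x 2 * (x 3)⁻¹ * x 3 * x 1) (by simp [rels])
  simp only [x, map_mul, mk_of, inv_mul_cancel_right] at this
  simpa [Commute, SemiconjBy, u, mul_assoc] using this

theorem commute_v_u : Commute v u :=
  (commute_of_one_u.mul_left (.refl u)).mul_left (.refl u)

theorem u_mul_of_one_mul_u : u * of 1 * u = v := by
  rw [v, commute_of_one_u.eq]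

theorem commute_v_of_three : Commute v (of 3) := by
  have := mk_eq_mk_of_mul_inv_mem (rels := rels)
    (x := x 3 * x 2 * (x 3)⁻¹ * x 3 * x 1 * x 3 * x 2 * (x 3)⁻¹ * x 3)
    (y := x 3 * x 1 * x 3 * x 2 * (x 3)⁻¹ * x 3 * x 3 * x 2 * (x 3)⁻¹) (by simp [rels])
  simp only [x, map_mul, map_inv, mk_of, inv_mul_cancel_right] at this
  calc v * of 3 = u * of 1 * u * of 3 := by rw [u_mul_of_one_mul_u]
    _ = of 3 * v := by simp only [u, v, ← mul_assoc]; rw [this]; group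

theorem of_five : (of 5 : G) = v⁻¹ := by
  have := one_of_mem (rels := rels) (x := x 5 * x 4 * x 3 * x 2 * x 1 * x 0) (by simp [rels])
  simp only [x, map_mul, mk_of, of_four, of_zero] at this
  have hconj : of 3 * v * (of 3)⁻¹ = v := by rw [← commute_v_of_three.eq, mul_inv_cancel_right]
  rw [eq_inv_iff_mul_eq_one, ← this, ← hconj, ← u_mul_of_one_mul_u, u]
  group

abbrev T : Type := Multiplicative ℤ × FreeGroup (Fin 2)

def genImage : Fin 6 → T :=
  ![(1, .of 0 * (.of 1)⁻¹), (.ofAdd 1, (.of 0)⁻¹ * (.of 0)⁻¹), (1, (.of 1)⁻¹ * .of 0),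
    (1, .of 1), (1, .of 1), (.ofAdd (-1), 1)]

theorem lift_genImage_eq_one : ∀ r ∈ rels, FreeGroup.lift genImage r = 1 := by
  simp only [rels, Set.mem_insert_iff, Set.mem_singleton_iff, forall_eq_or_imp, forall_eq]
  decide

def toProd : G →* T := toGroup lift_genImage_eq_one

def ofProd : T →* G :=
  (zpowersHom G v).noncommCoprod (FreeGroup.lift ![u, of 3]) fun _ w ↦
    (FreeGroup.commute_lift (f := ![u, of 3]) (Fin.forall_fin_two.mpr
      ⟨commute_v_u, commute_v_of_three⟩) w).zpow_left _

@[simp]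
theorem toProd_of (i : Fin 6) : toProd (of i) = genImage i :=
  toGroup.of _

@[simp]
theorem ofProd_apply (p : T) : ofProd p = v ^ p.1.toAdd * FreeGroup.lift ![u, of 3] p.2 :=
  rfl

theorem ofProd_comp_toProd : ofProd.comp toProd = .id G := by
  refine PresentedGroup.ext fun i ↦ ?_
  fin_cases i <;> simp [genImage, u, v, of_zero, of_four, of_five, mul_assoc]

theorem toProd_u : toProd u = (1, .of 0) := by
  simp [u, genImage]

theorem toProd_v : toProd v = (.ofAdd 1, 1) := by
  simp [v, toProd_u, genImage]

theorem toProd_comp_ofProd : toProd.comp ofProd = .id T := by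
  refine MonoidHom.prod_ext (MonoidHom.ext_mint ?_) (FreeGroup.ext_hom _ _ fun i ↦ ?_)
  · simp [toProd_v]
  · fin_cases i <;> simp [toProd_u, genImage]

theorem presentation_iso :
    Nonempty (PresentedGroup rels ≃* (Multiplicative ℤ × FreeGroup (Fin 2))) :=
  ⟨toProd.toMulEquiv ofProd ofProd_comp_toProd toProd_comp_ofProd⟩

end Stmt8
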